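/- arXiv:2503.22811 — 2 statements merged into one kernel-verified Lean document; each statement's English description precedes it below -/
import Mathlib

section
/- Let d ≥ 2, let y₁, …, yₙ ∈ ℝ^d be mutually distinct, and let c₁, …, cₙ ∈ ℂ. If the function u(θ) = Σⱼ cⱼ·exp(i·yⱼ·θ) vanishes for all θ ∈ S^{d-1} (the real unit sphere in ℝ^d), then cⱼ = 0 for all j. In other words, the family of functions θ ↦ exp(i·y·θ) on S^{d-1}, indexed by y ∈ ℝ^d, is linearly independent over ℂ. -/
/-!
Restrict to a great circle `θ(t) = cos t • e + sin t • e'`, where `e' ⊥ e` are unit vectors and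
the projections `aⱼ = ⟪yⱼ, e⟫` are distinct (a real vector space is not a finite union of the
proper subspaces `(yⱼ - yₖ)ᗮ`). With `bⱼ = ⟪yⱼ, e'⟫`, the entire function
`F z = ∑ cⱼ exp (i (aⱼ cos z + bⱼ sin z))` vanishes on `ℝ`, hence everywhere. On the line
`z = π/2 + i s` it equals `∑ cⱼ exp (aⱼ sinh s) exp (i bⱼ cosh s)`, and as `s → ∞` the term with
the largest `aⱼ` among the `cⱼ ≠ 0` would dominate all others.
-/

open scoped RealInnerProductSpace Real

open Complex Filter Finset Function Module Topology

section Directions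

variable {E : Type*} [NormedAddCommGroup E] [InnerProductSpace ℝ E]

lemma exists_ne_zero_injective_inner {ι : Type*} [Finite ι] [Nontrivial E] {y : ι → E}
    (hy : Injective y) : ∃ v : E, v ≠ 0 ∧ Injective fun j => ⟪y j, v⟫ := by
  let p : Option {q : ι × ι // q.1 ≠ q.2} → Submodule ℝ E
    | none => ⊥
    | some q => LinearMap.ker (innerₛₗ ℝ (y q.1.1 - y q.1.2))
  have hp : ∀ i, p i ≠ ⊤
    | none => bot_ne_top
    | some ⟨(j, k), hjk⟩ => fun htop => by
      have : y j - y k ∈ p (some ⟨(j, k), hjk⟩) := htop ▸ Submodule.mem_top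
      exact sub_ne_zero.2 (hy.ne hjk) (inner_self_eq_zero.1 this)
  obtain ⟨v, hv⟩ : ∃ v, v ∉ ⋃ i, (p i : Set E) := by
    by_contra! h
    obtain ⟨i, hi⟩ := Subspace.exists_eq_top_of_iUnion_eq_univ (Set.eq_univ_of_forall h)
    exact hp i hi
  simp only [Set.mem_iUnion, not_exists] at hv
  refine ⟨v, hv none, fun j k hjk => by_contra fun hne => hv (some ⟨(j, k), hne⟩) ?_⟩
  simpa [p, inner_sub_left, sub_eq_zero] using hjk

lemma exists_norm_eq_one_injective_inner {ι : Type*} [Finite ι] [Nontrivial E] {y : ι → E}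
    (hy : Injective y) : ∃ e : E, ‖e‖ = 1 ∧ Injective fun j => ⟪y j, e⟫ := by
  obtain ⟨v, hv0, hv⟩ := exists_ne_zero_injective_inner hy
  refine ⟨(‖v‖⁻¹ : ℝ) • v, norm_smul_inv_norm hv0, fun j k hjk => hv ?_⟩
  simpa [real_inner_smul_right, hv0] using hjk

lemma exists_norm_eq_one_inner_eq_zero [FiniteDimensional ℝ E] (hE : 2 ≤ finrank ℝ E) (e : E) :
    ∃ e' : E, ‖e'‖ = 1 ∧ ⟪e, e'⟫ = 0 := by
  have : Nontrivial (ℝ ∙ e)ᗮ := by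
    apply Module.nontrivial_of_finrank_pos (R := ℝ)
    have := (ℝ ∙ e).finrank_add_finrank_orthogonal
    have : finrank ℝ (ℝ ∙ e) ≤ 1 := (finrank_span_le_card {e}).trans (by simp)
    omega
  obtain ⟨e', he'⟩ := exists_norm_eq (ℝ ∙ e)ᗮ zero_le_one
  exact ⟨e', he',
    Submodule.inner_right_of_mem_orthogonal (Submodule.mem_span_singleton_self e) e'.2⟩

lemma norm_cos_smul_add_sin_smul {e e' : E} (he : ‖e‖ = 1) (he' : ‖e'‖ = 1) (h : ⟪e, e'⟫ = 0)
    (t : ℝ) : ‖Real.cos t • e + Real.sin t • e'‖ = 1 := by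
  have hsq : ‖Real.cos t • e + Real.sin t • e'‖ ^ 2 = 1 := by
    rw [norm_add_sq_real, real_inner_smul_left, real_inner_smul_right, h, norm_smul, norm_smul,
      he, he']
    simp [Real.cos_sq_add_sin_sq]
  exact (pow_eq_one_iff_of_nonneg (norm_nonneg _) two_ne_zero).1 hsq

end Directions

lemma Differentiable.eq_zero_of_forall_ofReal {F : ℂ → ℂ} (hF : Differentiable ℂ F)
    (h : ∀ t : ℝ, F t = 0) : F = 0 := by
  have hfreq : ∃ᶠ z in 𝓝[≠] (0 : ℂ), F z = 0 := by
    have : Tendsto ((↑) : ℝ → ℂ) (𝓝[≠] 0) (𝓝[≠] 0) :=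
      continuous_ofReal.continuousWithinAt.tendsto_nhdsWithin fun t ht => by simpa using ht
    exact this.frequently (Frequently.of_forall h)
  have hFa : AnalyticOnNhd ℂ F Set.univ := hF.differentiableOn.analyticOnNhd isOpen_univ
  funext z
  exact hFa.eqOn_zero_of_preconnected_of_frequently_eq_zero isPreconnected_univ (Set.mem_univ 0)
    hfreq (Set.mem_univ z)

lemma cexp_I_mul_cos_sin_pi_div_two_add_mul_I (a b s : ℝ) :
    cexp (I * (a * cos (π / 2 + s * I) + b * sin (π / 2 + s * I))) =
      Real.exp (a * Real.sinh s) * cexp (b * Real.cosh s * I) := by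
  rw [add_comm (π / 2 : ℂ), cos_add_pi_div_two, sin_add_pi_div_two, sin_mul_I, cos_mul_I,
    ofReal_exp, ← exp_add, ofReal_mul, ofReal_sinh, ofReal_cosh]
  congr 1
  linear_combination (-(a : ℂ) * sinh s) * I_sq

lemma eq_zero_of_forall_sum_mul_exp_mul_eq_zero {ι : Type*} [Fintype ι] {a : ι → ℝ}
    (ha : Injective a) {c : ι → ℂ} {w : ι → ℝ → ℂ} (hw : ∀ j r, ‖w j r‖ = 1)
    (h : ∀ r, ∑ j, c j * Real.exp (a j * r) * w j r = 0) : c = 0 := by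
  classical
  by_contra hc
  set S := univ.filter fun j => c j ≠ 0
  have hS : S.Nonempty := by
    obtain ⟨j, hj⟩ := Function.ne_iff.1 hc
    exact ⟨j, by simpa [S] using hj⟩
  obtain ⟨k, hkS, hk⟩ := S.exists_max_image a hS
  have hlt : ∀ j ∈ S.erase k, a j - a k < 0 := fun j hj =>
    sub_neg.2 ((hk j (mem_of_mem_erase hj)).lt_of_ne (ha.ne (ne_of_mem_erase hj)))
  have hnorm : ∀ j r, ‖c j * Real.exp (a j * r) * w j r‖ = ‖c j‖ * Real.exp (a j * r) := by
    intro j r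
    rw [norm_mul, norm_mul, norm_real, Real.norm_of_nonneg (Real.exp_nonneg _), hw, mul_one]
  have hbound : ∀ r, ‖c k‖ ≤ ∑ j ∈ S.erase k, ‖c j‖ * Real.exp ((a j - a k) * r) := by
    intro r
    have hsum : ∑ j ∈ S, c j * Real.exp (a j * r) * w j r = 0 := by
      rw [sum_filter_of_ne fun j _ hj => left_ne_zero_of_mul (left_ne_zero_of_mul hj)]
      exact h r
    rw [← add_sum_erase S _ hkS, add_eq_zero_iff_eq_neg] at hsum
    refine le_of_mul_le_mul_right ?_ (Real.exp_pos (a k * r))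
    calc ‖c k‖ * Real.exp (a k * r) = ‖c k * Real.exp (a k * r) * w k r‖ := (hnorm k r).symm
      _ ≤ ∑ j ∈ S.erase k, ‖c j * Real.exp (a j * r) * w j r‖ := by
        rw [hsum, norm_neg]
        exact norm_sum_le _ _
      _ = (∑ j ∈ S.erase k, ‖c j‖ * Real.exp ((a j - a k) * r)) * Real.exp (a k * r) := by
        rw [sum_mul]
        refine sum_congr rfl fun j _ => ?_
        rw [hnorm, mul_assoc, ← Real.exp_add]
        ring_nf
  have hlim :
      Tendsto (fun r => ∑ j ∈ S.erase k, ‖c j‖ * Real.exp ((a j - a k) * r)) atTop (𝓝 0) := by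
    simpa using tendsto_finsetSum _ fun j hj => (Real.tendsto_exp_atBot.comp
      (tendsto_id.const_mul_atTop_of_neg (hlt j hj))).const_mul ‖c j‖
  exact (mem_filter.1 hkS).2 (norm_le_zero_iff.1 (ge_of_tendsto' hlim hbound))

/-- Linear independence of `θ ↦ exp(i y·θ)` on the unit sphere `S^{d-1}`, `d ≥ 2`:
if `∑ⱼ cⱼ exp(i yⱼ·θ) = 0` for all unit `θ` with the `yⱼ` mutually distinct, then all `cⱼ = 0`. -/
theorem stmt2 (d n : ℕ) (hd : 2 ≤ d) (y : Fin n → EuclideanSpace ℝ (Fin d))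
    (hy : Function.Injective y) (c : Fin n → ℂ)
    (h : ∀ θ : EuclideanSpace ℝ (Fin d), ‖θ‖ = 1 →
      ∑ j, c j * Complex.exp (Complex.I * (⟪y j, θ⟫ : ℝ)) = 0) :
    ∀ j, c j = 0 := by
  have : Nonempty (Fin d) := ⟨⟨0, by omega⟩⟩
  obtain ⟨e, he, ha⟩ := exists_norm_eq_one_injective_inner hy
  obtain ⟨e', he', hee'⟩ := exists_norm_eq_one_inner_eq_zero (by simpa using hd) e
  set F : ℂ → ℂ := fun z => ∑ j, c j * cexp (I * (⟪y j, e⟫ * cos z + ⟪y j, e'⟫ * sin z))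
  have hF : F = 0 := by
    refine Differentiable.eq_zero_of_forall_ofReal (by fun_prop) fun t => ?_
    simpa [F, inner_add_right, real_inner_smul_right, mul_comm]
      using h _ (norm_cos_smul_add_sin_smul he he' hee' t)
  refine congrFun (eq_zero_of_forall_sum_mul_exp_mul_eq_zero ha
    (w := fun j r => cexp ((⟪y j, e'⟫ * Real.cosh (Real.arsinh r) : ℝ) * I))
    (fun j r => norm_exp_ofReal_mul_I _) fun r => ?_)
  simpa [F, cexp_I_mul_cos_sin_pi_div_two_add_mul_I, Real.sinh_arsinh, mul_assoc]
    using congrFun hF (π / 2 + Real.arsinh r * I)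
end

section
/- Let y₁, …, yₙ ∈ ℝ^d be mutually distinct, let l ∈ {1,…,n} satisfy |y_l| = max_k |y_k| > 0 with the maximizer unique, set e₂ = y_l/|y_l|, and let e₁ ∈ S^{d-1} with e₁·e₂ = 0. Then e₁·y_l = 0, e₂·y_l = |y_l|, and e₂·y_k < |y_l| for all k ≠ l; consequently, for nonzero c₁,…,cₙ ∈ ℂ, the function ũ(τ) = Σⱼ cⱼ·exp(τ·(e₂·yⱼ))·exp(-i·√(1+τ²)·(e₁·yⱼ)) satisfies ũ(τ)·exp(-τ|y_l|) → c_l as τ → +∞. -/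
open scoped RealInnerProductSpace
open Filter

/-- Case (iii) asymptotics in the proof of Proposition 1: with a unique maximal-norm node
`y_l`, `e₂ = y_l/|y_l|`, and `e₁ ⊥ e₂` unit, one has `e₁·y_l = 0`, `e₂·y_l = |y_l|`,
`e₂·y_k < |y_l|` for `k ≠ l`, and `ũ(τ)·exp(-τ|y_l|) → c_l` as `τ → +∞`. -/
theorem stmt5 (d n : ℕ) (y : Fin n → EuclideanSpace ℝ (Fin d))
    (hy : Function.Injective y) (c : Fin n → ℂ) (hc : ∀ j, c j ≠ 0)
    (l : Fin n) (hpos : 0 < ‖y l‖) (hmax : ∀ k, k ≠ l → ‖y k‖ < ‖y l‖)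
    (e₁ : EuclideanSpace ℝ (Fin d)) (e₂ : EuclideanSpace ℝ (Fin d))
    (he₂ : e₂ = ‖y l‖⁻¹ • y l) (he₁ : ‖e₁‖ = 1) (horth : ⟪e₁, e₂⟫ = 0) :
    ⟪e₁, y l⟫ = 0 ∧ ⟪e₂, y l⟫ = ‖y l‖ ∧ (∀ k, k ≠ l → ⟪e₂, y k⟫ < ‖y l‖) ∧
    Tendsto (fun τ : ℝ =>
        (∑ j, c j * Complex.exp ((τ * ⟪e₂, y j⟫ : ℝ)) *
          Complex.exp (-Complex.I * (Real.sqrt (1 + τ ^ 2) * ⟪e₁, y j⟫ : ℝ))) *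
        Complex.exp ((-(τ * ‖y l‖) : ℝ)))
      atTop (nhds (c l)) := by
  have hne : ‖y l‖ ≠ 0 := ne_of_gt hpos
  have h1 : ⟪e₁, y l⟫ = 0 := by
    have : ⟪e₁, e₂⟫ = ‖y l‖⁻¹ * ⟪e₁, y l⟫ := by
      rw [he₂, real_inner_smul_right]
    rw [this] at horth
    rcases mul_eq_zero.1 horth with h | h
    · exact absurd h (inv_ne_zero hne)
    · exact h
  have h2 : ⟪e₂, y l⟫ = ‖y l‖ := by
    rw [he₂, real_inner_smul_left, real_inner_self_eq_norm_sq]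
    field_simp
  have h3 : ∀ k, k ≠ l → ⟪e₂, y k⟫ < ‖y l‖ := by
    intro k hk
    have hcs : ⟪y l, y k⟫ ≤ ‖y l‖ * ‖y k‖ := real_inner_le_norm _ _
    have : ⟪e₂, y k⟫ ≤ ‖y k‖ := by
      rw [he₂, real_inner_smul_left]
      calc ‖y l‖⁻¹ * ⟪y l, y k⟫ ≤ ‖y l‖⁻¹ * (‖y l‖ * ‖y k‖) := by
            exact mul_le_mul_of_nonneg_left hcs (by positivity)
        _ = ‖y k‖ := by field_simp
    exact lt_of_le_of_lt this (hmax k hk)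
  refine ⟨h1, h2, h3, ?_⟩
  have key : ∀ τ : ℝ,
      (∑ j, c j * Complex.exp ((τ * ⟪e₂, y j⟫ : ℝ)) *
          Complex.exp (-Complex.I * (Real.sqrt (1 + τ ^ 2) * ⟪e₁, y j⟫ : ℝ))) *
        Complex.exp ((-(τ * ‖y l‖) : ℝ)) =
      ∑ j, c j * Complex.exp ((τ * ⟪e₂, y j⟫ : ℝ)) *
          Complex.exp (-Complex.I * (Real.sqrt (1 + τ ^ 2) * ⟪e₁, y j⟫ : ℝ)) *
        Complex.exp ((-(τ * ‖y l‖) : ℝ)) := fun τ => Finset.sum_mul ..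
  simp only [key]
  have hsum : (c l) = ∑ j : Fin n, if j = l then c l else 0 := by
    rw [Finset.sum_ite_eq' Finset.univ l (fun _ => c l)]
    simp
  rw [hsum]
  apply tendsto_finset_sum
  intro j _
  by_cases hj : j = l
  · subst hj
    simp only [if_pos rfl]
    have : ∀ τ : ℝ,
        c j * Complex.exp ((τ * ⟪e₂, y j⟫ : ℝ)) *
          Complex.exp (-Complex.I * (Real.sqrt (1 + τ ^ 2) * ⟪e₁, y j⟫ : ℝ)) *
          Complex.exp ((-(τ * ‖y j‖) : ℝ)) = c j := by
      intro τ
      rw [h1, h2]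
      push_cast
      rw [mul_zero, mul_zero, Complex.exp_zero, mul_one, mul_assoc,
        ← Complex.exp_add]
      simp
    simp only [this]
    exact tendsto_const_nhds
  · simp only [if_neg hj]
    rw [tendsto_zero_iff_norm_tendsto_zero]
    have hnorm : ∀ τ : ℝ,
        ‖c j * Complex.exp ((τ * ⟪e₂, y j⟫ : ℝ)) *
          Complex.exp (-Complex.I * (Real.sqrt (1 + τ ^ 2) * ⟪e₁, y j⟫ : ℝ)) *
          Complex.exp ((-(τ * ‖y l‖) : ℝ))‖ =
        ‖c j‖ * Real.exp (τ * (⟪e₂, y j⟫ - ‖y l‖)) := by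
      intro τ
      simp only [norm_mul, Complex.norm_exp]
      have : (-Complex.I * ((Real.sqrt (1 + τ ^ 2) * ⟪e₁, y j⟫ : ℝ) : ℂ)).re = 0 := by
        simp
      rw [this]
      simp only [Complex.ofReal_re, Real.exp_zero, mul_one]
      rw [mul_assoc, ← Real.exp_add]
      ring_nf
    simp only [hnorm]
    have hlim : Tendsto (fun τ : ℝ => τ * (⟪e₂, y j⟫ - ‖y l‖)) atTop atBot := by
      apply Tendsto.atTop_mul_const_of_neg _ tendsto_id
      linarith [h3 j hj]
    have := (Real.tendsto_exp_atBot.comp hlim).const_mul ‖c j‖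
    simpa using this
end
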